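/- Let B = R ⊕ Ri ⊕ Rj ⊕ Rk be the free exceptional ring with multiplication i² = ui, j² = vj, k² = wk, jk = vk, kj = wj, ki = wi, ik = uk, ij = uj, ji = vi for u,v,w ∈ R. Then B is an associative R-algebra, and the map sending x ∈ M = Ri⊕Rj⊕Rk to t(x) − x (where t(xi+yj+zk) = ux+vy+wz) extends to a standard involution on B. -/

import Mathlib

/-!
Write an element of `B` as `a + m` with `a ∈ R`, `m ∈ M`. The table says
`(a + m)(b + n) = ab + (a n + b m + t(m) n)`, so every axiom is a polynomial identity in the
coordinates; associativity, for instance, comes down to the linearity of `t`. The conjugate of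
`x = a + m` is `x̄ = a + t(m) − m`, so `x + x̄ = 2a + t(m)` and `x x̄ = a (a + t(m))` lie in `R`.
-/

/-- Multiplication on `R⁴` with basis `1, i, j, k` given by the exceptional table
`i² = ui`, `j² = vj`, `k² = wk`, `jk = vk`, `kj = wj`, `ki = wi`, `ik = uk`, `ij = uj`,
`ji = vi`; i.e. `xy = t(x)·y` for `x, y ∈ M = Ri ⊕ Rj ⊕ Rk` where `t(xi+yj+zk) = ux+vy+wz`. -/
def eMul {R : Type*} [CommRing R] (u v w : R) (x y : Fin 4 → R) : Fin 4 → R :=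
  ![x 0 * y 0,
    x 0 * y 1 + x 1 * y 0 + (u * x 1 + v * x 2 + w * x 3) * y 1,
    x 0 * y 2 + x 2 * y 0 + (u * x 1 + v * x 2 + w * x 3) * y 2,
    x 0 * y 3 + x 3 * y 0 + (u * x 1 + v * x 2 + w * x 3) * y 3]

/-- The conjugation map `r + x ↦ r + t(x) − x` on the free exceptional ring. -/
def eConj {R : Type*} [CommRing R] (u v w : R) (x : Fin 4 → R) : Fin 4 → R :=
  ![x 0 + u * x 1 + v * x 2 + w * x 3, -x 1, -x 2, -x 3]

namespace FreeExceptional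

variable {R : Type*} [CommRing R] (u v w : R)

def trace (x : Fin 4 → R) : R :=
  u * x 1 + v * x 2 + w * x 3

theorem eMul_assoc (x y z : Fin 4 → R) :
    eMul u v w (eMul u v w x y) z = eMul u v w x (eMul u v w y z) := by
  ext i; fin_cases i <;> simp [eMul] <;> ring

theorem one_eMul (x : Fin 4 → R) : eMul u v w ![1, 0, 0, 0] x = x := by
  ext i; fin_cases i <;> simp [eMul]

theorem eMul_one (x : Fin 4 → R) : eMul u v w x ![1, 0, 0, 0] = x := by
  ext i; fin_cases i <;> simp [eMul]

theorem add_eMul (x y z : Fin 4 → R) :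
    eMul u v w (x + y) z = eMul u v w x z + eMul u v w y z := by
  ext i; fin_cases i <;> simp [eMul] <;> ring

theorem eMul_add (x y z : Fin 4 → R) :
    eMul u v w x (y + z) = eMul u v w x y + eMul u v w x z := by
  ext i; fin_cases i <;> simp [eMul] <;> ring

theorem smul_eMul (r : R) (x y : Fin 4 → R) :
    eMul u v w (r • x) y = r • eMul u v w x y := by
  ext i; fin_cases i <;> simp [eMul] <;> ring

theorem eMul_smul (r : R) (x y : Fin 4 → R) :
    eMul u v w x (r • y) = r • eMul u v w x y := by
  ext i; fin_cases i <;> simp [eMul] <;> ring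

theorem eConj_add (x y : Fin 4 → R) : eConj u v w (x + y) = eConj u v w x + eConj u v w y := by
  ext i; fin_cases i <;> simp [eConj] <;> ring

theorem eConj_smul (r : R) (x : Fin 4 → R) : eConj u v w (r • x) = r • eConj u v w x := by
  ext i; fin_cases i <;> simp [eConj]; ring

theorem eConj_one : eConj u v w ![1, 0, 0, 0] = ![1, 0, 0, 0] := by
  ext i; fin_cases i <;> simp [eConj]

theorem eConj_eMul (x y : Fin 4 → R) :
    eConj u v w (eMul u v w x y) = eMul u v w (eConj u v w y) (eConj u v w x) := by
  ext i; fin_cases i <;> simp [eConj, eMul] <;> ring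

theorem eConj_eConj (x : Fin 4 → R) : eConj u v w (eConj u v w x) = x := by
  ext i; fin_cases i <;> simp [eConj]; ring

theorem eMul_eConj_self (x : Fin 4 → R) :
    eMul u v w x (eConj u v w x) = ![x 0 * (x 0 + trace u v w x), 0, 0, 0] := by
  ext i; fin_cases i <;> simp [eConj, eMul, trace] <;> ring

end FreeExceptional

open FreeExceptional in
/-- The free exceptional ring `B = R ⊕ Ri ⊕ Rj ⊕ Rk` is an associative unital `R`-algebra,
and `x ↦ t(x) − x` on `M = Ri⊕Rj⊕Rk` extends to a standard involution on `B`. -/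
theorem stmt_11 {R : Type*} [CommRing R] (u v w : R) :
    (∀ x y z : Fin 4 → R, eMul u v w (eMul u v w x y) z = eMul u v w x (eMul u v w y z)) ∧
    (∀ x : Fin 4 → R, eMul u v w ![1, 0, 0, 0] x = x) ∧
    (∀ x : Fin 4 → R, eMul u v w x ![1, 0, 0, 0] = x) ∧
    (∀ x y z : Fin 4 → R, eMul u v w (x + y) z = eMul u v w x z + eMul u v w y z) ∧
    (∀ x y z : Fin 4 → R, eMul u v w x (y + z) = eMul u v w x y + eMul u v w x z) ∧
    (∀ (r : R) (x y : Fin 4 → R), eMul u v w (r • x) y = r • eMul u v w x y) ∧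
    (∀ (r : R) (x y : Fin 4 → R), eMul u v w x (r • y) = r • eMul u v w x y) ∧
    -- `eConj` is a standard involution:
    (∀ x y : Fin 4 → R, eConj u v w (x + y) = eConj u v w x + eConj u v w y) ∧
    (∀ (r : R) (x : Fin 4 → R), eConj u v w (r • x) = r • eConj u v w x) ∧
    eConj u v w ![1, 0, 0, 0] = ![1, 0, 0, 0] ∧
    (∀ x y : Fin 4 → R, eConj u v w (eMul u v w x y)
        = eMul u v w (eConj u v w y) (eConj u v w x)) ∧
    (∀ x : Fin 4 → R, eConj u v w (eConj u v w x) = x) ∧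
    (∀ x : Fin 4 → R, ∃ r : R, eMul u v w x (eConj u v w x) = ![r, 0, 0, 0]) :=
  ⟨eMul_assoc u v w, one_eMul u v w, eMul_one u v w, add_eMul u v w, eMul_add u v w,
    smul_eMul u v w, eMul_smul u v w, eConj_add u v w, eConj_smul u v w, eConj_one u v w,
    eConj_eMul u v w, eConj_eConj u v w, fun x => ⟨_, eMul_eConj_self u v w x⟩⟩
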